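/- arXiv:2305.17037 — 3 statements merged into one kernel-verified Lean document; each statement's English description precedes it below -/
import Mathlib

section
/- For any two probability distributions P1 and P2 on R^d with zero means and finite second moments, with covariance matrices Σ1 and Σ2 respectively, the 2-Wasserstein distance between P1 and P2 is at least the Gelbrich distance between Σ1 and Σ2, i.e., W(P1,P2) ≥ sqrt(Tr(Σ1 + Σ2 - 2(Σ2^{1/2} Σ1 Σ2^{1/2})^{1/2})). -/
/-!
Put `B = Σ₂^{1/2}`, `M = B Σ₁ B`, `K = M^{1/4}`, and let `B⁺ = Σ₂^{-1/2}`, `K⁺ = M^{-1/4}`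
be the pseudo-inverse powers. For any coupling `(ξ₁, ξ₂)`, almost surely `ξ₂` lies in the
range of `Σ₂` and `B ξ₁` in the range of `M`, so that `ξ₁ ⬝ ξ₂ = (K⁺ B ξ₁) ⬝ (K B⁺ ξ₂)`.
Hence `2 ξ₁ ⬝ ξ₂ ≤ |K⁺ B ξ₁|² + |K B⁺ ξ₂|²`, and both terms have expectation
`tr (K⁺ M K⁺) = tr (K B⁺ Σ₂ B⁺ K) = tr M^{1/2}`. Expanding `|ξ₁ - ξ₂|²` then gives
`E |ξ₁ - ξ₂|² ≥ tr Σ₁ + tr Σ₂ - 2 tr M^{1/2}`.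
-/

open Matrix

/-- The positive semidefinite square root of a matrix (zero if the matrix is
not positive semidefinite). -/
noncomputable def psdSqrt {d : ℕ} (A : Matrix (Fin d) (Fin d) ℝ) :
    Matrix (Fin d) (Fin d) ℝ := by
  classical exact if h : A.PosSemidef then
    h.1.eigenvectorUnitary.1 * diagonal (Real.sqrt ∘ h.1.eigenvalues) *
      (star h.1.eigenvectorUnitary : Matrix (Fin d) (Fin d) ℝ) else 0

noncomputable def gelbrich {d : ℕ} (S1 S2 : Matrix (Fin d) (Fin d) ℝ) : ℝ :=
  Real.sqrt (S1 + S2 - (2 : ℝ) • psdSqrt (psdSqrt S2 * S1 * psdSqrt S2)).trace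

open MeasureTheory

noncomputable def wasserstein2 {d : ℕ} (P1 P2 : Measure (Fin d → ℝ)) : ℝ :=
  Real.sqrt (sInf ((fun π : Measure ((Fin d → ℝ) × (Fin d → ℝ)) =>
    ∫ p, ∑ i, (p.1 i - p.2 i) ^ 2 ∂π) ''
    {π | π.map Prod.fst = P1 ∧ π.map Prod.snd = P2}))

open Finset

namespace Matrix

variable {n : Type*} [Fintype n] [DecidableEq n]

lemma continuousOn_spectrum (f : ℝ → ℝ) (A : Matrix n n ℝ) :
    ContinuousOn f (spectrum ℝ A) :=
  A.finite_real_spectrum.continuousOn f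

/-- Since `0 ^ p = 0` for `p ≠ 0`, for a positive semidefinite `A` and `p < 0` this is the
Moore–Penrose pseudo-inverse of `A ^ (-p)`. -/
noncomputable def psdPow (A : Matrix n n ℝ) (p : ℝ) : Matrix n n ℝ :=
  cfc (fun t : ℝ => t ^ p) A

lemma transpose_psdPow (A : Matrix n n ℝ) (p : ℝ) : (A.psdPow p)ᵀ = A.psdPow p := by
  rw [← conjTranspose_eq_transpose_of_trivial]
  exact IsSelfAdjoint.cfc

lemma dotProduct_psdPow_mulVec (A : Matrix n n ℝ) (p : ℝ) (x y : n → ℝ) :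
    x ⬝ᵥ A.psdPow p *ᵥ y = A.psdPow p *ᵥ x ⬝ᵥ y := by
  rw [dotProduct_mulVec, ← vecMul_transpose, transpose_psdPow]

lemma IsHermitian.psdPow_one {A : Matrix n n ℝ} (hA : A.IsHermitian) : A.psdPow 1 = A := by
  simp only [psdPow, Real.rpow_one]
  exact cfc_id' ℝ A hA.isSelfAdjoint

lemma PosSemidef.nonneg_of_mem_spectrum {A : Matrix n n ℝ} (hA : A.PosSemidef) {t : ℝ}
    (ht : t ∈ spectrum ℝ A) : 0 ≤ t :=
  (posSemidef_iff_isHermitian_and_spectrum_nonneg.mp hA).2 ht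

lemma PosSemidef.psdPow_mul_psdPow {A : Matrix n n ℝ} (hA : A.PosSemidef) {p q : ℝ}
    (hpq : p + q ≠ 0) : A.psdPow p * A.psdPow q = A.psdPow (p + q) := by
  rw [psdPow, psdPow, ← cfc_mul _ _ A (continuousOn_spectrum _ A) (continuousOn_spectrum _ A)]
  exact cfc_congr fun t ht => (Real.rpow_add' (hA.nonneg_of_mem_spectrum ht) hpq).symm

lemma PosSemidef.psdPow_mul_self {A : Matrix n n ℝ} (hA : A.PosSemidef) {p : ℝ}
    (hp : p + 1 ≠ 0) : A.psdPow p * A = A.psdPow (p + 1) := by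
  simpa only [hA.1.psdPow_one] using hA.psdPow_mul_psdPow (q := 1) hp

lemma PosSemidef.self_mul_psdPow {A : Matrix n n ℝ} (hA : A.PosSemidef) {p : ℝ}
    (hp : 1 + p ≠ 0) : A * A.psdPow p = A.psdPow (1 + p) := by
  simpa only [hA.1.psdPow_one] using hA.psdPow_mul_psdPow (p := 1) hp

lemma PosSemidef.psdPow_mul_mul_psdPow {S : Matrix n n ℝ} (hS : S.PosSemidef)
    (A : Matrix n n ℝ) (p : ℝ) : (A.psdPow p * S * A.psdPow p).PosSemidef := by
  simpa only [conjTranspose_eq_transpose_of_trivial, transpose_psdPow] using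
    hS.mul_mul_conjTranspose_same (A.psdPow p)

/-- The orthogonal projection onto the range of a positive semidefinite matrix. -/
noncomputable def rangeProj (A : Matrix n n ℝ) : Matrix n n ℝ :=
  cfc (fun t : ℝ => if t = 0 then 0 else 1) A

lemma PosSemidef.psdPow_mul_psdPow_neg {A : Matrix n n ℝ} (hA : A.PosSemidef) {p : ℝ}
    (hp : p ≠ 0) : A.psdPow p * A.psdPow (-p) = A.rangeProj := by
  rw [psdPow, psdPow, rangeProj,
    ← cfc_mul _ _ A (continuousOn_spectrum _ A) (continuousOn_spectrum _ A)]
  refine cfc_congr fun t ht => ?_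
  rcases (hA.nonneg_of_mem_spectrum ht).eq_or_lt with rfl | ht₀
  · simp [hp]
  · rw [if_neg ht₀.ne', Real.rpow_neg ht₀.le,
      mul_inv_cancel₀ (Real.rpow_pos_of_pos ht₀ p).ne']

lemma rangeProj_mul_psdPow (A : Matrix n n ℝ) {p : ℝ} (hp : p ≠ 0) :
    A.rangeProj * A.psdPow p = A.psdPow p := by
  rw [psdPow, rangeProj,
    ← cfc_mul _ _ A (continuousOn_spectrum _ A) (continuousOn_spectrum _ A)]
  refine cfc_congr fun t _ => ?_
  by_cases ht : t = 0 <;> simp [ht, hp]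

lemma IsHermitian.rangeProj_mul_self {A : Matrix n n ℝ} (hA : A.IsHermitian) :
    A.rangeProj * A = A := by
  simpa only [hA.psdPow_one] using A.rangeProj_mul_psdPow one_ne_zero

lemma PosSemidef.dotProduct_eq_of_rangeProj_mulVec {A M : Matrix n n ℝ} (hA : A.PosSemidef)
    (hM : M.PosSemidef) {p q : ℝ} (hp : p ≠ 0) (hq : q ≠ 0) {x y : n → ℝ}
    (hx : M.rangeProj *ᵥ A.psdPow p *ᵥ x = A.psdPow p *ᵥ x) (hy : A.rangeProj *ᵥ y = y) :
    x ⬝ᵥ y = M.psdPow (-q) *ᵥ A.psdPow p *ᵥ x ⬝ᵥ M.psdPow q *ᵥ A.psdPow (-p) *ᵥ y :=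
  calc x ⬝ᵥ y = x ⬝ᵥ A.psdPow p *ᵥ A.psdPow (-p) *ᵥ y := by
        rw [mulVec_mulVec, hA.psdPow_mul_psdPow_neg hp, hy]
    _ = A.psdPow p *ᵥ x ⬝ᵥ A.psdPow (-p) *ᵥ y := dotProduct_psdPow_mulVec _ _ _ _
    _ = M.psdPow q *ᵥ M.psdPow (-q) *ᵥ A.psdPow p *ᵥ x ⬝ᵥ A.psdPow (-p) *ᵥ y := by
        rw [mulVec_mulVec, hM.psdPow_mul_psdPow_neg hq, hx]
    _ = _ := (dotProduct_psdPow_mulVec _ _ _ _).symm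

theorem PosSemidef.exists_gelbrich_factorization {S₁ S₂ : Matrix n n ℝ}
    (h₁ : S₁.PosSemidef) (h₂ : S₂.PosSemidef) :
    ∃ C D Q₁ Q₂ : Matrix n n ℝ, Q₁ * S₁ * Q₁ᵀ = 0 ∧ Q₂ * S₂ * Q₂ᵀ = 0 ∧
      (∀ x y, Q₁ *ᵥ x = 0 → Q₂ *ᵥ y = 0 → x ⬝ᵥ y = C *ᵥ x ⬝ᵥ D *ᵥ y) ∧
      C * S₁ * Cᵀ = (S₂.psdPow (1 / 2) * S₁ * S₂.psdPow (1 / 2)).psdPow (1 / 2) ∧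
      D * S₂ * Dᵀ = (S₂.psdPow (1 / 2) * S₁ * S₂.psdPow (1 / 2)).psdPow (1 / 2) := by
  set B := S₂.psdPow (1 / 2) with hB
  set M := B * S₁ * B with hM_def
  have hM : M.PosSemidef := h₁.psdPow_mul_mul_psdPow S₂ (1 / 2)
  refine ⟨M.psdPow (-(1 / 4)) * B, M.psdPow (1 / 4) * S₂.psdPow (-(1 / 2)),
    (1 - M.rangeProj) * B, 1 - S₂.rangeProj, ?_, ?_, fun x y hx hy => ?_, ?_, ?_⟩
  · rw [transpose_mul, hB, transpose_psdPow, ← hB]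
    calc (1 - M.rangeProj) * B * S₁ * (B * (1 - M.rangeProj)ᵀ)
        = (1 - M.rangeProj) * M * (1 - M.rangeProj)ᵀ := by rw [hM_def]; simp only [mul_assoc]
      _ = 0 := by rw [sub_mul, one_mul, hM.1.rangeProj_mul_self, sub_self, zero_mul]
  · rw [sub_mul, one_mul, h₂.1.rangeProj_mul_self, sub_self, zero_mul]
  · rw [← mulVec_mulVec, sub_mulVec, one_mulVec, sub_eq_zero] at hx
    rw [sub_mulVec, one_mulVec, sub_eq_zero] at hy
    simpa only [mulVec_mulVec] using
      h₂.dotProduct_eq_of_rangeProj_mulVec hM (p := 1 / 2) (q := 1 / 4) (by norm_num)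
        (by norm_num) hx.symm hy.symm
  · rw [transpose_mul, hB, transpose_psdPow, transpose_psdPow, ← hB]
    calc M.psdPow (-(1 / 4)) * B * S₁ * (B * M.psdPow (-(1 / 4)))
        = M.psdPow (-(1 / 4)) * M * M.psdPow (-(1 / 4)) := by
          rw [hM_def]; simp only [mul_assoc]
      _ = M.psdPow (1 / 2) := by
        rw [hM.psdPow_mul_self (by norm_num), hM.psdPow_mul_psdPow (by norm_num)]; norm_num
  · have hPK : S₂.rangeProj * M.psdPow (1 / 4) = M.psdPow (1 / 4) := by
      rw [show (1 / 4 : ℝ) = 1 + -(3 / 4) by norm_num, ← hM.self_mul_psdPow (by norm_num),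
        hM_def, ← mul_assoc, ← mul_assoc, ← mul_assoc, rangeProj_mul_psdPow _ (by norm_num)]
    rw [transpose_mul, transpose_psdPow, transpose_psdPow]
    calc M.psdPow (1 / 4) * S₂.psdPow (-(1 / 2)) * S₂ *
          (S₂.psdPow (-(1 / 2)) * M.psdPow (1 / 4))
        = M.psdPow (1 / 4) * (S₂.psdPow (-(1 / 2)) * S₂ * S₂.psdPow (-(1 / 2)) *
            M.psdPow (1 / 4)) := by simp only [mul_assoc]
      _ = M.psdPow (1 / 4) * M.psdPow (1 / 4) := by
        rw [h₂.psdPow_mul_self (by norm_num), show -(1 / 2) + 1 = (1 / 2 : ℝ) by norm_num,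
          h₂.psdPow_mul_psdPow_neg (by norm_num), hPK]
      _ = M.psdPow (1 / 2) := by rw [hM.psdPow_mul_psdPow (by norm_num)]; norm_num

end Matrix

lemma psdSqrt_eq_psdPow {d : ℕ} {A : Matrix (Fin d) (Fin d) ℝ} (hA : A.PosSemidef) :
    psdSqrt A = A.psdPow (1 / 2) := by
  rw [psdSqrt, dif_pos hA, psdPow, hA.1.cfc_eq, IsHermitian.cfc, Unitary.conjStarAlgAut_apply]
  simp only [Function.comp_def, RCLike.ofReal_real_eq_id, id, Real.sqrt_eq_rpow]

lemma gelbrich_eq_of_posSemidef {d : ℕ} {S₁ S₂ : Matrix (Fin d) (Fin d) ℝ}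
    (h₁ : S₁.PosSemidef) (h₂ : S₂.PosSemidef) :
    gelbrich S₁ S₂ = √(S₁ + S₂ -
      (2 : ℝ) • (S₂.psdPow (1 / 2) * S₁ * S₂.psdPow (1 / 2)).psdPow (1 / 2)).trace := by
  rw [gelbrich, psdSqrt_eq_psdPow h₂, psdSqrt_eq_psdPow (h₁.psdPow_mul_mul_psdPow S₂ (1 / 2))]

section SecondMoment

variable {ι : Type*} [Fintype ι] {P : Measure (ι → ℝ)} {S : Matrix ι ι ℝ}

lemma integrable_apply_mul_apply (h : Integrable (fun x => ∑ i, x i ^ 2) P) (i j : ι) :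
    Integrable (fun x => x i * x j) P := by
  refine h.mono' (by fun_prop) (ae_of_all _ fun x => ?_)
  have hi := single_le_sum (fun k _ => sq_nonneg (x k)) (mem_univ i)
  have hj := single_le_sum (fun k _ => sq_nonneg (x k)) (mem_univ j)
  rw [Real.norm_eq_abs, abs_mul]
  nlinarith [two_mul_le_add_sq |x i| |x j|, sq_abs (x i), sq_abs (x j)]

lemma dotProduct_mul_dotProduct (v w x : ι → ℝ) :
    (v ⬝ᵥ x) * (w ⬝ᵥ x) = ∑ i, ∑ j, v i * w j * (x i * x j) := by
  simp only [dotProduct, sum_mul_sum]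
  exact sum_congr rfl fun i _ => sum_congr rfl fun j _ => by ring

lemma integrable_dotProduct_mul_dotProduct (h : Integrable (fun x => ∑ i, x i ^ 2) P)
    (v w : ι → ℝ) : Integrable (fun x => (v ⬝ᵥ x) * (w ⬝ᵥ x)) P := by
  simp only [dotProduct_mul_dotProduct]
  exact integrable_finsetSum _ fun i _ => integrable_finsetSum _ fun j _ =>
    (integrable_apply_mul_apply h i j).const_mul _

lemma integral_dotProduct_mul_dotProduct (h : Integrable (fun x => ∑ i, x i ^ 2) P)
    (hS : ∀ i j, S i j = ∫ x, x i * x j ∂P) (v w : ι → ℝ) :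
    ∫ x, (v ⬝ᵥ x) * (w ⬝ᵥ x) ∂P = v ⬝ᵥ S *ᵥ w := by
  simp only [dotProduct_mul_dotProduct]
  rw [integral_finsetSum _ fun i _ => integrable_finsetSum _ fun j _ =>
    (integrable_apply_mul_apply h i j).const_mul _]
  simp only [integral_finsetSum _ fun j _ => (integrable_apply_mul_apply h _ j).const_mul _,
    integral_const_mul, ← hS, dotProduct, mulVec, mul_sum]
  exact sum_congr rfl fun i _ => sum_congr rfl fun j _ => by ring

lemma posSemidef_of_eq_integral_mul (h : Integrable (fun x => ∑ i, x i ^ 2) P)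
    (hS : ∀ i j, S i j = ∫ x, x i * x j ∂P) : S.PosSemidef := by
  refine posSemidef_iff_dotProduct_mulVec.mpr ⟨?_, fun v => ?_⟩
  · ext i j
    simp only [conjTranspose_apply, star_trivial, hS, mul_comm]
  · rw [star_trivial, ← integral_dotProduct_mul_dotProduct h hS]
    exact integral_nonneg fun x => mul_self_nonneg _

variable {m : Type*} [Fintype m]

lemma sum_mulVec_sq (A : Matrix m ι ℝ) (x : ι → ℝ) :
    ∑ i, (A *ᵥ x) i ^ 2 = ∑ i, ((fun j => A i j) ⬝ᵥ x) * ((fun j => A i j) ⬝ᵥ x) := by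
  simp only [sq]; rfl

lemma integrable_sum_mulVec_sq (h : Integrable (fun x => ∑ i, x i ^ 2) P) (A : Matrix m ι ℝ) :
    Integrable (fun x => ∑ i, (A *ᵥ x) i ^ 2) P := by
  simp only [sum_mulVec_sq]
  exact integrable_finsetSum _ fun i _ => integrable_dotProduct_mul_dotProduct h _ _

lemma integral_sum_mulVec_sq (h : Integrable (fun x => ∑ i, x i ^ 2) P)
    (hS : ∀ i j, S i j = ∫ x, x i * x j ∂P) (A : Matrix m ι ℝ) :
    ∫ x, ∑ i, (A *ᵥ x) i ^ 2 ∂P = (A * S * Aᵀ).trace := by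
  simp only [sum_mulVec_sq]
  rw [integral_finsetSum _ fun i _ => integrable_dotProduct_mul_dotProduct h _ _]
  simp only [integral_dotProduct_mul_dotProduct h hS]
  simp only [trace, Matrix.diag, mul_apply, transpose_apply, dotProduct, mulVec, mul_sum, sum_mul]
  refine sum_congr rfl fun i _ => ?_
  rw [sum_comm]
  exact sum_congr rfl fun j _ => sum_congr rfl fun k _ => by ring

lemma integral_sum_sq (h : Integrable (fun x => ∑ i, x i ^ 2) P)
    (hS : ∀ i j, S i j = ∫ x, x i * x j ∂P) : ∫ x, ∑ i, x i ^ 2 ∂P = S.trace := by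
  rw [integral_finsetSum _ fun i _ => by simpa only [sq] using integrable_apply_mul_apply h i i]
  simp only [trace, Matrix.diag, hS, sq]

lemma ae_mulVec_eq_zero (h : Integrable (fun x => ∑ i, x i ^ 2) P)
    (hS : ∀ i j, S i j = ∫ x, x i * x j ∂P) {A : Matrix m ι ℝ} (hA : A * S * Aᵀ = 0) :
    ∀ᵐ x ∂P, A *ᵥ x = 0 := by
  have hzero : ∫ x, ∑ i, (A *ᵥ x) i ^ 2 ∂P = 0 := by
    rw [integral_sum_mulVec_sq h hS, hA, trace_zero]
  filter_upwards [(integral_eq_zero_iff_of_nonneg (fun x => by positivity)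
    (integrable_sum_mulVec_sq h A)).mp hzero] with x hx
  funext i
  exact pow_eq_zero_iff two_ne_zero |>.mp <|
    (sum_eq_zero_iff_of_nonneg fun k _ => sq_nonneg _).mp hx i (mem_univ i)

end SecondMoment

section Coupling

variable {ι : Type*} [Fintype ι]

lemma sum_sq_add_sum_sq_sub_le_sum_sub_sq {x y u w : ι → ℝ} (h : x ⬝ᵥ y = u ⬝ᵥ w) :
    ∑ i, x i ^ 2 + ∑ i, y i ^ 2 - (∑ i, u i ^ 2 + ∑ i, w i ^ 2) ≤
      ∑ i, (x i - y i) ^ 2 := by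
  have hxy : ∑ i, (x i - y i) ^ 2 = ∑ i, x i ^ 2 + ∑ i, y i ^ 2 - 2 * (x ⬝ᵥ y) := by
    rw [dotProduct, mul_sum, ← sum_add_distrib, ← sum_sub_distrib]
    exact sum_congr rfl fun i _ => by ring
  have huw : 2 * (u ⬝ᵥ w) ≤ ∑ i, u i ^ 2 + ∑ i, w i ^ 2 := by
    rw [dotProduct, mul_sum, ← sum_add_distrib]
    exact sum_le_sum fun i _ => by linarith [two_mul_le_add_sq (u i) (w i)]
  linarith

lemma integrable_sum_sub_sq {μ : Measure ((ι → ℝ) × (ι → ℝ))}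
    (h₁ : Integrable (fun p => ∑ i, p.1 i ^ 2) μ)
    (h₂ : Integrable (fun p => ∑ i, p.2 i ^ 2) μ) :
    Integrable (fun p => ∑ i, (p.1 i - p.2 i) ^ 2) μ := by
  refine ((h₁.add h₂).const_mul 2).mono' (by fun_prop) (ae_of_all _ fun p => ?_)
  rw [Real.norm_eq_abs, abs_of_nonneg (by positivity), Pi.add_apply, mul_add, mul_sum, mul_sum,
    ← sum_add_distrib]
  exact sum_le_sum fun i _ => by nlinarith [sq_nonneg (p.1 i + p.2 i)]

variable {P₁ P₂ : Measure (ι → ℝ)} {S₁ S₂ : Matrix ι ι ℝ}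

theorem trace_sub_le_integral_sum_sub_sq (h₁ : Integrable (fun x => ∑ i, x i ^ 2) P₁)
    (h₂ : Integrable (fun x => ∑ i, x i ^ 2) P₂)
    (hS₁ : ∀ i j, S₁ i j = ∫ x, x i * x j ∂P₁) (hS₂ : ∀ i j, S₂ i j = ∫ x, x i * x j ∂P₂)
    {π : Measure ((ι → ℝ) × (ι → ℝ))}
    (hπ₁ : π.map Prod.fst = P₁) (hπ₂ : π.map Prod.snd = P₂) {C D : Matrix ι ι ℝ}
    (hCD : ∀ᵐ p ∂π, p.1 ⬝ᵥ p.2 = C *ᵥ p.1 ⬝ᵥ D *ᵥ p.2) :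
    S₁.trace + S₂.trace - ((C * S₁ * Cᵀ).trace + (D * S₂ * Dᵀ).trace) ≤
      ∫ p, ∑ i, (p.1 i - p.2 i) ^ 2 ∂π := by
  subst hπ₁ hπ₂
  have hX : Integrable (fun p => ∑ i, p.1 i ^ 2) π := h₁.comp_measurable measurable_fst
  have hY : Integrable (fun p => ∑ i, p.2 i ^ 2) π := h₂.comp_measurable measurable_snd
  have hCX : Integrable (fun p => ∑ i, (C *ᵥ p.1) i ^ 2) π :=
    (integrable_sum_mulVec_sq h₁ C).comp_measurable measurable_fst
  have hDY : Integrable (fun p => ∑ i, (D *ᵥ p.2) i ^ 2) π :=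
    (integrable_sum_mulVec_sq h₂ D).comp_measurable measurable_snd
  have hXY : Integrable (fun p => ∑ i, p.1 i ^ 2 + ∑ i, p.2 i ^ 2) π := hX.add hY
  have hCXDY : Integrable (fun p => ∑ i, (C *ᵥ p.1) i ^ 2 + ∑ i, (D *ᵥ p.2) i ^ 2) π :=
    hCX.add hDY
  have hEX : ∫ p, ∑ i, p.1 i ^ 2 ∂π = S₁.trace := by
    rw [← integral_sum_sq h₁ hS₁, integral_map measurable_fst.aemeasurable h₁.1]
  have hEY : ∫ p, ∑ i, p.2 i ^ 2 ∂π = S₂.trace := by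
    rw [← integral_sum_sq h₂ hS₂, integral_map measurable_snd.aemeasurable h₂.1]
  have hECX : ∫ p, ∑ i, (C *ᵥ p.1) i ^ 2 ∂π = (C * S₁ * Cᵀ).trace := by
    rw [← integral_sum_mulVec_sq h₁ hS₁,
      integral_map measurable_fst.aemeasurable (integrable_sum_mulVec_sq h₁ C).1]
  have hEDY : ∫ p, ∑ i, (D *ᵥ p.2) i ^ 2 ∂π = (D * S₂ * Dᵀ).trace := by
    rw [← integral_sum_mulVec_sq h₂ hS₂,
      integral_map measurable_snd.aemeasurable (integrable_sum_mulVec_sq h₂ D).1]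
  calc S₁.trace + S₂.trace - ((C * S₁ * Cᵀ).trace + (D * S₂ * Dᵀ).trace)
      = ∫ p, ∑ i, p.1 i ^ 2 + ∑ i, p.2 i ^ 2 -
          (∑ i, (C *ᵥ p.1) i ^ 2 + ∑ i, (D *ᵥ p.2) i ^ 2) ∂π := by
        rw [integral_sub hXY hCXDY, integral_add hX hY, integral_add hCX hDY, hEX, hEY, hECX,
          hEDY]
    _ ≤ ∫ p, ∑ i, (p.1 i - p.2 i) ^ 2 ∂π :=
        integral_mono_ae (hXY.sub hCXDY) (integrable_sum_sub_sq hX hY)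
          (hCD.mono fun _ hp => sum_sq_add_sum_sq_sub_le_sum_sub_sq hp)

end Coupling

theorem gelbrich_le_wasserstein2_general {d : ℕ} (P1 P2 : Measure (Fin d → ℝ))
    [IsProbabilityMeasure P1] [IsProbabilityMeasure P2]
    (hint1 : Integrable (fun x => ∑ i, (x i) ^ 2) P1)
    (hint2 : Integrable (fun x => ∑ i, (x i) ^ 2) P2)
    (S1 S2 : Matrix (Fin d) (Fin d) ℝ)
    (hS1 : ∀ i j, S1 i j = ∫ x, x i * x j ∂P1)
    (hS2 : ∀ i j, S2 i j = ∫ x, x i * x j ∂P2) :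
    gelbrich S1 S2 ≤ wasserstein2 P1 P2 := by
  have h₁ := posSemidef_of_eq_integral_mul hint1 hS1
  have h₂ := posSemidef_of_eq_integral_mul hint2 hS2
  obtain ⟨C, D, Q₁, Q₂, hQ₁, hQ₂, hdot, hC, hD⟩ :=
    h₁.exists_gelbrich_factorization h₂
  rw [gelbrich_eq_of_posSemidef h₁ h₂, wasserstein2]
  refine Real.sqrt_le_sqrt
    (le_csInf ⟨_, P1.prod P2, ⟨Measure.fst_prod, Measure.snd_prod⟩, rfl⟩ ?_)
  rintro _ ⟨π, ⟨hπ₁, hπ₂⟩, rfl⟩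
  have hCD : ∀ᵐ p ∂π, p.1 ⬝ᵥ p.2 = C *ᵥ p.1 ⬝ᵥ D *ᵥ p.2 := by
    filter_upwards [ae_of_ae_map measurable_fst.aemeasurable
        (hπ₁ ▸ ae_mulVec_eq_zero hint1 hS1 hQ₁),
      ae_of_ae_map measurable_snd.aemeasurable (hπ₂ ▸ ae_mulVec_eq_zero hint2 hS2 hQ₂)]
      with p hp₁ hp₂ using hdot _ _ hp₁ hp₂
  have hcost := trace_sub_le_integral_sum_sub_sq hint1 hint2 hS1 hS2 hπ₁ hπ₂ hCD
  rw [hC, hD] at hcost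
  simp only [trace_sub, trace_add, trace_smul, smul_eq_mul]
  linarith

/-- Gelbrich bound: for any two zero-mean distributions on `ℝ^d` with finite
second moments and covariance matrices `S1`, `S2`, the 2-Wasserstein distance
is bounded below by the Gelbrich distance between the covariance matrices. -/
theorem gelbrich_le_wasserstein2 {d : ℕ} (P1 P2 : Measure (Fin d → ℝ))
    [IsProbabilityMeasure P1] [IsProbabilityMeasure P2]
    (hint1 : Integrable (fun x => ∑ i, (x i) ^ 2) P1)
    (hint2 : Integrable (fun x => ∑ i, (x i) ^ 2) P2)
    (hmean1 : ∀ i, ∫ x, x i ∂P1 = 0) (hmean2 : ∀ i, ∫ x, x i ∂P2 = 0)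
    (S1 S2 : Matrix (Fin d) (Fin d) ℝ)
    (hS1 : ∀ i j, S1 i j = ∫ x, x i * x j ∂P1)
    (hS2 : ∀ i j, S2 i j = ∫ x, x i * x j ∂P2) :
    gelbrich S1 S2 ≤ wasserstein2 P1 P2 :=
  gelbrich_le_wasserstein2_general P1 P2 hint1 hint2 S1 S2 hS1 hS2
end

section
/- Let H, C be matrices such that CH is strictly block lower triangular. If a control satisfies u = Uη + q with U block lower triangular, where η = y - CHu, then u = U'y + q' with U' = (I + UCH)^{-1} U and q' = (I + UCH)^{-1} q. Conversely, if u = U'y + q' with U' block lower triangular, then u = Uη + q with U = (I - U'CH)^{-1} U' and q = (I - U'CH)^{-1} q'. -/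
/-! Substituting `η = y - CHu` into `u = Uη + q` gives the closed-loop equation
`(1 + UCH) u = U y + q`. Since `UCH` is strictly block lower triangular, `1 + UCH` is block
unit lower triangular, so its determinant is `1` and the loop can be solved for `u`. The
converse is the same computation with `CH` replaced by `-CH`. -/

open Matrix

/-- A matrix with rows indexed by `Fin T × Fin m` and columns by `Fin T × Fin p`
is block lower triangular if all blocks strictly above the diagonal vanish. -/
def IsBlockLowerTri {T m p : ℕ}
    (U : Matrix (Fin T × Fin m) (Fin T × Fin p) ℝ) : Prop :=
  ∀ i j, i.1 < j.1 → U i j = 0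

/-- A matrix is strictly block lower triangular if all blocks on or above the
diagonal vanish. -/
def IsStrictBlockLowerTri {T p m : ℕ}
    (A : Matrix (Fin T × Fin p) (Fin T × Fin m) ℝ) : Prop :=
  ∀ i j, i.1 ≤ j.1 → A i j = 0

namespace Matrix

variable {ι κ α R : Type*} [Fintype ι] [DecidableEq ι] [CommRing R]

theorem det_one_add_of_strict_blockTriangular [LinearOrder α] (b : ι → α) {N : Matrix ι ι R}
    (hN : ∀ i j, b j ≤ b i → N i j = 0) : (1 + N).det = 1 := by
  have hblock : BlockTriangular (1 + N) b :=
    blockTriangular_one.add fun i j hij => hN i j hij.le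
  rw [hblock.det]
  refine Finset.prod_eq_one fun a _ => ?_
  have hdiag : (1 + N).toSquareBlock b a = 1 := by
    ext ⟨i, hi⟩ ⟨j, hj⟩
    simp [toSquareBlock_def, one_apply, hN i j (hj.trans hi.symm).le, Subtype.ext_iff]
  rw [hdiag, det_one]

theorem eq_inv_mul_mulVec_add_of_eq_mulVec_sub [Fintype κ] {K : Matrix ι κ R}
    {G : Matrix κ ι R} {u q : ι → R} {x : κ → R} (hdet : IsUnit (1 + K * G).det)
    (hu : u = K *ᵥ (x - G *ᵥ u) + q) :
    u = ((1 + K * G)⁻¹ * K) *ᵥ x + (1 + K * G)⁻¹ *ᵥ q := by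
  have hloop : (1 + K * G) *ᵥ u = K *ᵥ x + q := by
    rw [mulVec_sub] at hu
    rw [add_mulVec, one_mulVec, ← mulVec_mulVec]
    linear_combination hu
  calc u = (1 + K * G)⁻¹ *ᵥ ((1 + K * G) *ᵥ u) := by
        rw [mulVec_mulVec, nonsing_inv_mul _ hdet, one_mulVec]
    _ = ((1 + K * G)⁻¹ * K) *ᵥ x + (1 + K * G)⁻¹ *ᵥ q := by
        rw [hloop, mulVec_add, mulVec_mulVec]

end Matrix

section

variable {T m p : ℕ}

theorem IsBlockLowerTri.mul_isStrictBlockLowerTri {U : Matrix (Fin T × Fin m) (Fin T × Fin p) ℝ}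
    {A : Matrix (Fin T × Fin p) (Fin T × Fin m) ℝ} (hU : IsBlockLowerTri U)
    (hA : IsStrictBlockLowerTri A) : IsStrictBlockLowerTri (U * A) := by
  intro i j hij
  rw [mul_apply]
  refine Finset.sum_eq_zero fun k _ => ?_
  rcases lt_or_ge i.1 k.1 with hik | hki
  · rw [hU i k hik, zero_mul]
  · rw [hA k j (hki.trans hij), mul_zero]

theorem IsStrictBlockLowerTri.neg {A : Matrix (Fin T × Fin p) (Fin T × Fin m) ℝ}
    (hA : IsStrictBlockLowerTri A) : IsStrictBlockLowerTri (-A) := fun i j hij => by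
  rw [neg_apply, hA i j hij, neg_zero]

theorem IsStrictBlockLowerTri.isUnit_det_one_add {N : Matrix (Fin T × Fin m) (Fin T × Fin m) ℝ}
    (hN : IsStrictBlockLowerTri N) : IsUnit (1 + N).det := by
  rw [det_one_add_of_strict_blockTriangular (fun i => OrderDual.toDual i.1) fun i j => hN i j]
  exact isUnit_one

end

/-- One-to-one correspondence between causal linear purified output-feedback
controllers `u = Uη + q` and causal linear output-feedback controllers
`u = U'y + q'`, where `η = y - CHu`. -/
theorem purified_output_feedback_equiv {T m p n : ℕ}
    (C : Matrix (Fin T × Fin p) (Fin n) ℝ)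
    (H : Matrix (Fin n) (Fin T × Fin m) ℝ)
    (hCH : IsStrictBlockLowerTri (C * H))
    (u : Fin T × Fin m → ℝ) (y η : Fin T × Fin p → ℝ)
    (hη : η = y - (C * H).mulVec u) :
    (∀ (U : Matrix (Fin T × Fin m) (Fin T × Fin p) ℝ) (q : Fin T × Fin m → ℝ),
      IsBlockLowerTri U → u = U.mulVec η + q →
        u = ((1 + U * C * H)⁻¹ * U).mulVec y + (1 + U * C * H)⁻¹.mulVec q) ∧
    (∀ (U' : Matrix (Fin T × Fin m) (Fin T × Fin p) ℝ) (q' : Fin T × Fin m → ℝ),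
      IsBlockLowerTri U' → u = U'.mulVec y + q' →
        u = ((1 - U' * C * H)⁻¹ * U').mulVec η + (1 - U' * C * H)⁻¹.mulVec q') := by
  constructor
  · intro U q hU hu
    rw [Matrix.mul_assoc]
    exact eq_inv_mul_mulVec_add_of_eq_mulVec_sub
      (hU.mul_isStrictBlockLowerTri hCH).isUnit_det_one_add (hη ▸ hu)
  · intro U' q' hU' hu
    have hy : y = η - (-(C * H)) *ᵥ u := by rw [hη, neg_mulVec]; abel
    rw [Matrix.mul_assoc, sub_eq_add_neg, ← Matrix.mul_neg]
    exact eq_inv_mul_mulVec_add_of_eq_mulVec_sub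
      (hU'.mul_isStrictBlockLowerTri hCH.neg).isUnit_det_one_add (hy ▸ hu)
end

section
/- Let Ẑ ∈ S_{++}^d, Γ ∈ S_+^d with Γ ≠ 0, and ρ > 0. For γ > λ_max(Γ), define h(γ) = ρ² - ⟨Ẑ, (I - γ(γI - Γ)^{-1})²⟩. Then h has a unique root γ* in the interval (λ_max(Γ), ∞). -/
open Matrix

/-- The largest eigenvalue of a Hermitian matrix. -/
noncomputable def lamMax {d : ℕ} (Γ : Matrix (Fin d) (Fin d) ℝ)
    (hΓ : Γ.IsHermitian) : ℝ :=
  ⨆ i, hΓ.eigenvalues i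

/-! Diagonalising `Γ = U diag(μ) Uᵀ` gives `I - γ(γI - Γ)⁻¹ = U diag(-μᵢ / (γ - μᵢ)) Uᵀ`, so the
trace equals the secular function `∑ᵢ wᵢ μᵢ² / (γ - μᵢ)²` with weights `wᵢ = (Uᵀ Ẑ U)ᵢᵢ > 0`. On
`(λ_max, ∞)` it is continuous and strictly decreasing; the term of a top eigenvalue (nonzero since
`Γ ≠ 0`) makes it blow up at `λ_max`, and it tends to `0` at `∞`. Hence it takes the value `ρ²`
exactly once. -/

open Filter Topology Set Unitary

theorem StrictAntiOn.existsUnique_eq_of_tendsto {f : ℝ → ℝ} {L l c : ℝ}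
    (hanti : StrictAntiOn f (Ioi L)) (hcont : ContinuousOn f (Ioi L))
    (hleft : Tendsto f (𝓝[>] L) atTop) (hright : Tendsto f atTop (𝓝 l)) (hlc : l < c) :
    ∃! x, x ∈ Ioi L ∧ f x = c := by
  obtain ⟨a, hca, haL⟩ := ((hleft.eventually_gt_atTop c).and self_mem_nhdsWithin).exists
  obtain ⟨b, hbc, hab⟩ :=
    ((hright.eventually (gt_mem_nhds hlc)).and (eventually_ge_atTop a)).exists
  have hsub : Icc a b ⊆ Ioi L := fun x hx => lt_of_lt_of_le haL hx.1
  obtain ⟨x, hx, hfx⟩ := intermediate_value_Icc' hab (hcont.mono hsub) ⟨hbc.le, hca.le⟩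
  exact ⟨x, ⟨hsub hx, hfx⟩, fun y hy => hanti.injOn hy.1 (hsub hx) (hy.2.trans hfx.symm)⟩

section SecularSum

lemma tendsto_sq_div_sub_sq_atTop (μ : ℝ) :
    Tendsto (fun γ => μ ^ 2 / (γ - μ) ^ 2) atTop (𝓝 0) :=
  tendsto_const_nhds.div_atTop <|
    (tendsto_pow_atTop two_ne_zero).comp (tendsto_atTop_add_const_right _ (-μ) tendsto_id)

lemma tendsto_sq_div_sub_sq_nhdsGT {μ : ℝ} (hμ : μ ≠ 0) :
    Tendsto (fun γ => μ ^ 2 / (γ - μ) ^ 2) (𝓝[>] μ) atTop := by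
  have hsub : Tendsto (fun γ => γ - μ) (𝓝[>] μ) (𝓝[>] 0) :=
    tendsto_nhdsWithin_iff.2 ⟨tendsto_sub_nhds_zero_iff.2 nhdsWithin_le_nhds,
      eventually_mem_nhdsWithin.mono fun _ h => sub_pos.2 (mem_Ioi.1 h)⟩
  have := ((tendsto_pow_atTop two_ne_zero).comp
    (tendsto_inv_nhdsGT_zero.comp hsub)).const_mul_atTop (pow_pos (abs_pos.2 hμ) 2)
  simpa [div_eq_mul_inv, inv_pow] using this

lemma sq_div_sub_sq_le {μ x y : ℝ} (hx : μ < x) (hxy : x ≤ y) :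
    μ ^ 2 / (y - μ) ^ 2 ≤ μ ^ 2 / (x - μ) ^ 2 := by
  gcongr

lemma sq_div_sub_sq_lt {μ x y : ℝ} (hμ : μ ≠ 0) (hx : μ < x) (hxy : x < y) :
    μ ^ 2 / (y - μ) ^ 2 < μ ^ 2 / (x - μ) ^ 2 := by
  have : 0 < μ ^ 2 := by positivity
  gcongr

variable {ι : Type*} [Fintype ι]

noncomputable def secularSum (w μ : ι → ℝ) (γ : ℝ) : ℝ :=
  ∑ i, w i * (μ i ^ 2 / (γ - μ i) ^ 2)

variable {w μ : ι → ℝ} {i₀ : ι}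

lemma continuousOn_secularSum (hmax : ∀ i, μ i ≤ μ i₀) :
    ContinuousOn (secularSum w μ) (Ioi (μ i₀)) := by
  refine continuousOn_finsetSum _ fun i _ => continuousOn_const.mul <|
    continuousOn_const.div (by fun_prop) fun x hx => ?_
  exact pow_ne_zero _ (sub_ne_zero.2 ((hmax i).trans_lt hx).ne')

lemma strictAntiOn_secularSum (hw : ∀ i, 0 ≤ w i) (hmax : ∀ i, μ i ≤ μ i₀) (hw₀ : 0 < w i₀)
    (hne : μ i₀ ≠ 0) : StrictAntiOn (secularSum w μ) (Ioi (μ i₀)) := fun _ hx _ _ hxy =>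
  Finset.sum_lt_sum
    (fun i _ => mul_le_mul_of_nonneg_left
      (sq_div_sub_sq_le ((hmax i).trans_lt hx) hxy.le) (hw i))
    ⟨i₀, Finset.mem_univ _, mul_lt_mul_of_pos_left (sq_div_sub_sq_lt hne hx hxy) hw₀⟩

lemma tendsto_secularSum_nhdsGT (hw : ∀ i, 0 ≤ w i) (hw₀ : 0 < w i₀) (hne : μ i₀ ≠ 0) :
    Tendsto (secularSum w μ) (𝓝[>] μ i₀) atTop :=
  tendsto_atTop_mono
    (fun γ => Finset.single_le_sum (f := fun i => w i * (μ i ^ 2 / (γ - μ i) ^ 2))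
      (fun i _ => mul_nonneg (hw i) (by positivity)) (Finset.mem_univ i₀))
    ((tendsto_sq_div_sub_sq_nhdsGT hne).const_mul_atTop hw₀)

lemma tendsto_secularSum_atTop : Tendsto (secularSum w μ) atTop (𝓝 0) := by
  unfold secularSum
  simpa using tendsto_finsetSum Finset.univ fun i _ =>
    (tendsto_sq_div_sub_sq_atTop (μ i)).const_mul (w i)

theorem existsUnique_secularSum_eq (hw : ∀ i, 0 ≤ w i) (hmax : ∀ i, μ i ≤ μ i₀)
    (hw₀ : 0 < w i₀) (hne : μ i₀ ≠ 0) {c : ℝ} (hc : 0 < c) :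
    ∃! γ, γ ∈ Ioi (μ i₀) ∧ secularSum w μ γ = c :=
  (strictAntiOn_secularSum hw hmax hw₀ hne).existsUnique_eq_of_tendsto
    (continuousOn_secularSum hmax) (tendsto_secularSum_nhdsGT hw hw₀ hne)
    tendsto_secularSum_atTop hc

end SecularSum

namespace Matrix

variable {n : Type*} [Fintype n] [DecidableEq n]

lemma trace_mul_conjStarAlgAut_diagonal {R : Type*} [CommRing R] [StarRing R]
    (A : Matrix n n R) (U : unitary (Matrix n n R)) (v : n → R) :
    (A * conjStarAlgAut R _ U (diagonal v)).trace =
      ∑ i, (star (U : Matrix n n R) * A * U) i i * v i := by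
  rw [conjStarAlgAut_apply, ← Matrix.mul_assoc, trace_mul_comm]
  simp only [← Matrix.mul_assoc, trace, diag, mul_diagonal]

lemma PosSemidef.exists_eigenvalues_pos {A : Matrix n n ℝ} (hA : A.PosSemidef) (hne : A ≠ 0) :
    ∃ i, 0 < hA.1.eigenvalues i := by
  obtain ⟨i, hi⟩ := Function.ne_iff.1 (hA.1.eigenvalues_eq_zero_iff.not.2 hne)
  exact ⟨i, (hA.eigenvalues_nonneg i).lt_of_ne' hi⟩

namespace IsHermitian

variable {A : Matrix n n ℝ} (hA : A.IsHermitian) {γ : ℝ}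

lemma smul_one_sub_eq : γ • 1 - A =
    conjStarAlgAut ℝ _ hA.eigenvectorUnitary (diagonal fun i => γ - hA.eigenvalues i) := by
  have hdiag : (diagonal fun i => γ - hA.eigenvalues i) =
      γ • 1 - diagonal (RCLike.ofReal ∘ hA.eigenvalues) := by
    rw [← diagonal_one, ← diagonal_smul, diagonal_sub]
    simp
  rw [hdiag, map_sub, map_smul, map_one, ← hA.spectral_theorem]

lemma smul_one_sub_inv_eq (hγ : ∀ i, hA.eigenvalues i ≠ γ) : (γ • 1 - A)⁻¹ =
    conjStarAlgAut ℝ _ hA.eigenvectorUnitary (diagonal fun i => (γ - hA.eigenvalues i)⁻¹) := by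
  refine inv_eq_right_inv ?_
  rw [hA.smul_one_sub_eq, ← map_mul, diagonal_mul_diagonal,
    ← map_one (conjStarAlgAut ℝ _ _), ← diagonal_one]
  congr 2
  funext i
  exact mul_inv_cancel₀ (sub_ne_zero.2 (hγ i).symm)

lemma one_sub_smul_smul_one_sub_inv_eq (hγ : ∀ i, hA.eigenvalues i ≠ γ) :
    1 - γ • (γ • 1 - A)⁻¹ = conjStarAlgAut ℝ _ hA.eigenvectorUnitary
      (diagonal fun i => -hA.eigenvalues i / (γ - hA.eigenvalues i)) := by
  rw [hA.smul_one_sub_inv_eq hγ, ← map_smul, ← map_one (conjStarAlgAut ℝ _ _), ← map_sub,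
    ← diagonal_one, ← diagonal_smul, diagonal_sub]
  congr 2
  funext i
  have := sub_ne_zero.2 (hγ i).symm
  simp only [Pi.smul_apply, smul_eq_mul]
  field_simp
  ring

end IsHermitian

end Matrix

lemma eigenvalues_le_lamMax {d : ℕ} {Γ : Matrix (Fin d) (Fin d) ℝ} (hΓ : Γ.IsHermitian)
    (i : Fin d) : hΓ.eigenvalues i ≤ lamMax Γ hΓ :=
  le_ciSup (finite_range _).bddAbove i

lemma exists_eigenvalues_eq_lamMax {d : ℕ} [Nonempty (Fin d)] {Γ : Matrix (Fin d) (Fin d) ℝ}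
    (hΓ : Γ.IsHermitian) : ∃ i, hΓ.eigenvalues i = lamMax Γ hΓ :=
  exists_eq_ciSup_of_finite

/-- For `Ẑ ≻ 0`, `Γ ⪰ 0` with `Γ ≠ 0` and `ρ > 0`, the function
`h(γ) = ρ² - ⟨Ẑ, (I - γ(γI - Γ)⁻¹)²⟩` has a unique root in the interval
`(λ_max(Γ), ∞)`. -/
theorem unique_root_dual_equation {d : ℕ}
    (Zh Γ : Matrix (Fin d) (Fin d) ℝ)
    (hZh : Zh.PosDef) (hΓ : Γ.PosSemidef) (hΓne : Γ ≠ 0)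
    (ρ : ℝ) (hρ : 0 < ρ) :
    ∃! γ : ℝ, γ ∈ Set.Ioi (lamMax Γ hΓ.1) ∧
      ρ ^ 2 - (Zhᵀ * ((1 : Matrix (Fin d) (Fin d) ℝ)
        - γ • (γ • (1 : Matrix (Fin d) (Fin d) ℝ) - Γ)⁻¹) ^ 2).trace = 0 := by
  obtain ⟨j, hj⟩ := hΓ.exists_eigenvalues_pos hΓne
  have : Nonempty (Fin d) := ⟨j⟩
  obtain ⟨i₀, hi₀⟩ := exists_eigenvalues_eq_lamMax hΓ.1
  rw [← hi₀]
  set μ := hΓ.1.eigenvalues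
  set U := hΓ.1.eigenvectorUnitary
  set w : Fin d → ℝ := fun i => (star (U : Matrix (Fin d) (Fin d) ℝ) * Zhᵀ * U) i i
  have hmax : ∀ i, μ i ≤ μ i₀ := fun i => hi₀ ▸ eigenvalues_le_lamMax hΓ.1 i
  have hw : ∀ i, 0 < w i := fun i =>
    (hZh.transpose.conjTranspose_mul_mul_same (mulVec_injective_iff_isUnit.2 isUnit_coe)).diag_pos
  have htrace : ∀ γ ∈ Ioi (μ i₀),
      (Zhᵀ * (1 - γ • (γ • 1 - Γ)⁻¹) ^ 2).trace = secularSum w μ γ := by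
    intro γ hγ
    rw [hΓ.1.one_sub_smul_smul_one_sub_inv_eq fun i => ((hmax i).trans_lt hγ).ne, ← map_pow,
      diagonal_pow, trace_mul_conjStarAlgAut_diagonal]
    simp only [secularSum, Pi.pow_apply, neg_div, neg_sq, div_pow]
    rfl
  refine (existsUnique_congr fun γ => and_congr_right fun hγ => ?_).2
    (existsUnique_secularSum_eq (fun i => (hw i).le) hmax (hw i₀) (hj.trans_le (hmax j)).ne'
      (pow_pos hρ 2))
  rw [htrace γ hγ, sub_eq_zero, eq_comm]
end
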